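/- Under the ellipticity and form-bound hypotheses with λ₁ > 0, define D(𝐀) to be the set of u ∈ H¹₀(Ω) with Lu − βu ∈ L²(Ω) (distributionally), where Lu = Σ ∂_i(a_ij ∂_j u), and 𝐀u = −Lu + βu. Then 𝐀 is self-adjoint on L²(Ω) with spectrum contained in [λ₁, ∞) ⊂ (0, ∞). -/

import Mathlib

/-!
A symmetric operator on a Hilbert space that is onto is self-adjoint: its domain is dense
because anything orthogonal to it is `A x` with `x` orthogonal to the range, and its
adjoint extends it and is injective, so it cannot be a proper extension. The operator of a
symmetric coercive form is onto by Lax–Milgram, and `⟪A x, x⟫ = b(y, y) ≥ λ₁ ‖x‖²`.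
-/

open scoped InnerProductSpace

namespace LinearPMap

section Order

variable {R E F : Type*} [Ring R] [AddCommGroup E] [Module R E] [AddCommGroup F] [Module R F]

theorem eq_of_le_of_surjective_of_injective {f g : E →ₗ.[R] F} (hle : f ≤ g)
    (hf : Function.Surjective f) (hg : Function.Injective g) : f = g := by
  refine eq_of_le_of_domain_eq hle (le_antisymm hle.1 fun x hx => ?_)
  obtain ⟨u, hu⟩ := hf (g ⟨x, hx⟩)
  have hux : (⟨u, hle.1 u.2⟩ : g.domain) = ⟨x, hx⟩ := hg ((hle.2 rfl).symm.trans hu)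
  have hux' : (u : E) = x := congrArg Subtype.val hux
  exact hux' ▸ u.2

end Order

section Adjoint

variable {𝕜 E F : Type*} [RCLike 𝕜] [NormedAddCommGroup E] [InnerProductSpace 𝕜 E]
  [NormedAddCommGroup F] [InnerProductSpace 𝕜 F] {T : E →ₗ.[𝕜] F} {S : F →ₗ.[𝕜] E}

theorem eq_zero_of_forall_inner_apply_eq_zero (hS : Function.Surjective S) {x : E}
    (hx : ∀ y : S.domain, ⟪x, S y⟫_𝕜 = 0) : x = 0 := by
  obtain ⟨y, hy⟩ := hS x
  simpa [hy] using hx y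

theorem IsFormalAdjoint.injective_of_surjective (h : T.IsFormalAdjoint S)
    (hS : Function.Surjective S) : Function.Injective T :=
  (injective_iff_map_eq_zero T.toFun).2 fun x hx => Subtype.ext <|
    eq_zero_of_forall_inner_apply_eq_zero hS fun y => by
      rw [← h x y]
      exact (congrArg (⟪·, (y : F)⟫_𝕜) hx).trans (inner_zero_left _)

theorem IsFormalAdjoint.dense_domain_of_surjective [CompleteSpace F] (h : T.IsFormalAdjoint S)
    (hT : Function.Surjective T) (hS : Function.Surjective S) : Dense (S.domain : Set F) := by
  rw [Submodule.dense_iff_topologicalClosure_eq_top, Submodule.topologicalClosure_eq_top_iff,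
    Submodule.eq_bot_iff]
  intro w hw
  obtain ⟨x, rfl⟩ := hT w
  have hx : x = 0 := Subtype.ext <| eq_zero_of_forall_inner_apply_eq_zero hS fun y => by
    rw [← h x y]
    exact Submodule.inner_left_of_mem_orthogonal y.2 hw
  rw [hx, map_zero]

theorem isSelfAdjoint_of_isFormalAdjoint_of_surjective [CompleteSpace E] {A : E →ₗ.[𝕜] E}
    (hsymm : A.IsFormalAdjoint A) (hA : Function.Surjective A) : IsSelfAdjoint A := by
  have hdense := hsymm.dense_domain_of_surjective hA hA
  exact (eq_of_le_of_surjective_of_injective (hsymm.le_adjoint hdense) hA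
    ((adjoint_isFormalAdjoint hdense).injective_of_surjective hA)).symm

end Adjoint

end LinearPMap

theorem IsCoercive.exists_forall_apply_eq {V : Type*} [NormedAddCommGroup V]
    [InnerProductSpace ℝ V] [CompleteSpace V] {B : V →L[ℝ] V →L[ℝ] ℝ} (hB : IsCoercive B)
    (ℓ : V →L[ℝ] ℝ) : ∃ u : V, ∀ v : V, B u v = ℓ v :=
  ⟨hB.continuousLinearEquivOfBilin.symm ((InnerProductSpace.toDual ℝ V).symm ℓ), fun v => by
    rw [← hB.continuousLinearEquivOfBilin_apply, ContinuousLinearEquiv.apply_symm_apply,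
      InnerProductSpace.toDual_symm_apply]⟩

section FormOperator

variable {X Y : Type*} [NormedAddCommGroup X] [InnerProductSpace ℝ X]
  [NormedAddCommGroup Y] [InnerProductSpace ℝ Y]

def IsFormOperator (j : Y →L[ℝ] X) (b : Y →L[ℝ] Y →L[ℝ] ℝ) (A : X →ₗ.[ℝ] X) : Prop :=
  (∀ x : X, x ∈ A.domain ↔ ∃ y : Y, j y = x ∧ ∃ g : X, ∀ v : Y, b y v = ⟪g, j v⟫_ℝ) ∧
    ∀ (x : A.domain) (y : Y) (g : X), j y = x → (∀ v : Y, b y v = ⟪g, j v⟫_ℝ) → A x = g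

namespace IsFormOperator

variable {j : Y →L[ℝ] X} {b : Y →L[ℝ] Y →L[ℝ] ℝ} {A : X →ₗ.[ℝ] X}

theorem exists_apply (hA : IsFormOperator j b A) (x : A.domain) :
    ∃ y : Y, j y = x ∧ ∀ v : Y, b y v = ⟪A x, j v⟫_ℝ := by
  obtain ⟨y, hy, g, hg⟩ := (hA.1 x).1 x.2
  exact ⟨y, hy, hA.2 x y g hy hg ▸ hg⟩

theorem isFormalAdjoint (hA : IsFormOperator j b A) (hb : ∀ u v : Y, b u v = b v u) :
    A.IsFormalAdjoint A := fun x x' => by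
  obtain ⟨y, hy, hAy⟩ := hA.exists_apply x
  obtain ⟨y', hy', hAy'⟩ := hA.exists_apply x'
  calc ⟪A x, (x' : X)⟫_ℝ = b y y' := by rw [← hy', hAy]
    _ = b y' y := hb y y'
    _ = ⟪(x : X), A x'⟫_ℝ := by rw [hAy', ← hy, real_inner_comm]

theorem mul_norm_sq_le_inner (hA : IsFormOperator j b A) {c : ℝ}
    (hb : ∀ u : Y, c * ‖j u‖ ^ 2 ≤ b u u) (x : A.domain) :
    c * ‖(x : X)‖ ^ 2 ≤ ⟪A x, (x : X)⟫_ℝ := by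
  obtain ⟨y, hy, hAy⟩ := hA.exists_apply x
  simpa only [hy, hAy] using hb y

theorem surjective [CompleteSpace Y] (hA : IsFormOperator j b A) (hb : IsCoercive b) :
    Function.Surjective A := fun f => by
  obtain ⟨y, hy⟩ := hb.exists_forall_apply_eq ((innerSL ℝ f).comp j)
  have hmem : j y ∈ A.domain := (hA.1 (j y)).2 ⟨y, rfl, f, hy⟩
  exact ⟨⟨j y, hmem⟩, hA.2 ⟨j y, hmem⟩ y f rfl hy⟩

theorem isSelfAdjoint [CompleteSpace X] [CompleteSpace Y] (hA : IsFormOperator j b A)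
    (hsymm : ∀ u v : Y, b u v = b v u) (hb : IsCoercive b) : IsSelfAdjoint A :=
  LinearPMap.isSelfAdjoint_of_isFormalAdjoint_of_surjective (hA.isFormalAdjoint hsymm)
    (hA.surjective hb)

end IsFormOperator

end FormOperator

theorem divergence_form_operator_selfadjoint_positive_general
    {X Y : Type*}
    [NormedAddCommGroup X] [InnerProductSpace ℝ X] [CompleteSpace X]
    [NormedAddCommGroup Y] [InnerProductSpace ℝ Y] [CompleteSpace Y]
    (j : Y →L[ℝ] X)
    (b : Y →L[ℝ] Y →L[ℝ] ℝ)
    (hbsymm : ∀ u v : Y, b u v = b v u)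
    (hbcoercive : ∃ c : ℝ, 0 < c ∧ ∀ u : Y, c * ‖u‖ ^ 2 ≤ b u u)
    (lam₁ : ℝ)
    (hlam₁ : ∀ u : Y, lam₁ * ‖j u‖ ^ 2 ≤ b u u)
    (A : X →ₗ.[ℝ] X)
    (hdom : ∀ x : X, x ∈ A.domain ↔
      ∃ y : Y, j y = x ∧ ∃ g : X, ∀ v : Y, b y v = (inner ℝ g (j v) : ℝ))
    (hA : ∀ (x : A.domain) (y : Y) (g : X), j y = (x : X) →
      (∀ v : Y, b y v = (inner ℝ g (j v) : ℝ)) → A x = g) :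
    IsSelfAdjoint A ∧
    ∀ x : A.domain, lam₁ * ‖(x : X)‖ ^ 2 ≤ (inner ℝ (A x) (x : X) : ℝ) := by
  have hform : IsFormOperator j b A := ⟨hdom, hA⟩
  obtain ⟨c, hc, hcoer⟩ := hbcoercive
  have hb : IsCoercive b := ⟨c, hc, fun u => by simpa only [mul_assoc, ← sq] using hcoer u⟩
  exact ⟨hform.isSelfAdjoint hbsymm hb, hform.mul_norm_sq_le_inner hlam₁⟩

/-- Abstract form of Proposition 3.4.  `X` stands for `L²(Ω)` and `Y`
for the form domain `H¹₀(Ω)` (with its `H¹`-type norm), included in `X` by the injective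
continuous dense embedding `j`.  The symmetric bilinear form
`b u v = ∫ [Σ aᵢⱼ ∂ᵢu ∂ⱼv + β u v]` is continuous and coercive on `Y` (consequences of
ellipticity and of the form bound on `β`) and satisfies `b u u ≥ λ₁ ‖u‖²_{L²}` with
`λ₁ > 0`.  The operator `𝐀 u = -Lu + βu` is the partial linear map `A` on `X` with domain
`D(A) = {u ∈ H¹₀ : Lu - βu ∈ L²}`, i.e. the set of `j y` for which there is `g ∈ X` with
`b y v = ⟨g, j v⟩_{L²}` for all `v ∈ Y`, and `A (j y) = g` (weak formulation of the
distributional condition).  Then `A` is self-adjoint on `L²(Ω)` and its spectrum is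
contained in `[λ₁, ∞) ⊆ (0, ∞)`; for a self-adjoint operator the latter is equivalent to
the lower bound `⟨Au, u⟩ ≥ λ₁ ‖u‖²` on the domain. -/
theorem divergence_form_operator_selfadjoint_positive
    {X Y : Type*}
    [NormedAddCommGroup X] [InnerProductSpace ℝ X] [CompleteSpace X]
    [NormedAddCommGroup Y] [InnerProductSpace ℝ Y] [CompleteSpace Y]
    (j : Y →L[ℝ] X) (hj_inj : Function.Injective j) (hj_dense : DenseRange j)
    (b : Y →L[ℝ] Y →L[ℝ] ℝ)
    (hbsymm : ∀ u v : Y, b u v = b v u)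
    (hbcoercive : ∃ c : ℝ, 0 < c ∧ ∀ u : Y, c * ‖u‖ ^ 2 ≤ b u u)
    (lam₁ : ℝ) (hlam : 0 < lam₁)
    (hlam₁ : ∀ u : Y, lam₁ * ‖j u‖ ^ 2 ≤ b u u)
    (A : X →ₗ.[ℝ] X)
    (hdom : ∀ x : X, x ∈ A.domain ↔
      ∃ y : Y, j y = x ∧ ∃ g : X, ∀ v : Y, b y v = (inner ℝ g (j v) : ℝ))
    (hA : ∀ (x : A.domain) (y : Y) (g : X), j y = (x : X) →
      (∀ v : Y, b y v = (inner ℝ g (j v) : ℝ)) → A x = g) :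
    IsSelfAdjoint A ∧
    ∀ x : A.domain, lam₁ * ‖(x : X)‖ ^ 2 ≤ (inner ℝ (A x) (x : X) : ℝ) :=
  divergence_form_operator_selfadjoint_positive_general j b hbsymm hbcoercive lam₁ hlam₁ A hdom hA
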